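/- Let T be a hereditary torsion class in Mod(C) and F = {F_C} the associated filter with F_C = { I ⊆ C(-,C) | C(-,C)/I ∈ T }. If J ∈ F_C and I ⊆ C(-,C) is an ideal such that (I(-):h) ∈ F_B for every object B and every h ∈ J(B), then I ∈ F_C (axiom T4 holds). -/

import Mathlib

open CategoryTheory CategoryTheory.Limits Opposite

universe u

variable (C : Type u) [SmallCategory C] [Preadditive C]

abbrev ModC := Cᵒᵖ ⥤ AddCommGrpCat.{u}

-- check instances

variable {C}

/-- A right ideal of `C(-,c)`: a subfunctor of the representable functor. -/
structure RightIdeal (c : C) where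
  carrier : ∀ A : C, Set (A ⟶ c)
  zero_mem : ∀ A : C, (0 : A ⟶ c) ∈ carrier A
  add_mem : ∀ {A : C} {f g : A ⟶ c}, f ∈ carrier A → g ∈ carrier A → f + g ∈ carrier A
  neg_mem : ∀ {A : C} {f : A ⟶ c}, f ∈ carrier A → -f ∈ carrier A
  comp_mem : ∀ {A B : C} (g : B ⟶ A) {f : A ⟶ c}, f ∈ carrier A → g ≫ f ∈ carrier B

/-- Intersection of right ideals. -/
def RightIdeal.inf {c : C} (I J : RightIdeal c) : RightIdeal c where
  carrier A := I.carrier A ∩ J.carrier A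
  zero_mem A := ⟨I.zero_mem A, J.zero_mem A⟩
  add_mem := fun {A f g} h h' => ⟨I.add_mem h.1 h'.1, J.add_mem h.2 h'.2⟩
  neg_mem := fun {A f} h => ⟨I.neg_mem h.1, J.neg_mem h.2⟩
  comp_mem := fun {A B} g {f} h => ⟨I.comp_mem g h.1, J.comp_mem g h.2⟩

/-- The quotient ideal `(I(-):h) ⊆ C(-,B)` for `h : B ⟶ c`. -/
def RightIdeal.res {c B : C} (I : RightIdeal c) (h : B ⟶ c) : RightIdeal B where
  carrier A := {f : A ⟶ B | f ≫ h ∈ I.carrier A}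
  zero_mem A := by simpa using I.zero_mem A
  add_mem := fun {A f g} hf hg => by simpa [Preadditive.add_comp] using I.add_mem hf hg
  neg_mem := fun {A f} hf => by simpa [Preadditive.neg_comp] using I.neg_mem hf
  comp_mem := fun {A B} g {f} hf => by simpa [Category.assoc] using I.comp_mem g hf

/-- The annihilator ideal of an element `x ∈ M(c)`. -/
def Ann (M : ModC C) [M.Additive] {c : C} (x : M.obj (op c)) : RightIdeal c where
  carrier A := {f : A ⟶ c | M.map f.op x = 0}
  zero_mem A := by simp [Set.mem_setOf_eq]
  add_mem := fun {A f g} hf hg => by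
    simp only [Set.mem_setOf_eq] at *
    rw [op_add, Functor.map_add]
    show M.map f.op x + M.map g.op x = 0
    simp [hf, hg]
  neg_mem := fun {A f} hf => by
    simp only [Set.mem_setOf_eq] at *
    rw [op_neg, Functor.map_neg]
    show -(M.map f.op x) = 0
    simp [hf]
  comp_mem := fun {A B} g {f} hf => by
    simp only [Set.mem_setOf_eq] at *
    rw [op_comp, M.map_comp, comp_apply, hf]
    exact AddMonoidHom.map_zero _
/-- The Yoneda natural transformation `η^x : C(-,c) ⟶ M` attached to `x ∈ M(c)`. -/
def etaX (M : ModC C) [M.Additive] {c : C} (x : M.obj (op c)) :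
    preadditiveYoneda.obj c ⟶ M where
  app A := AddCommGrpCat.ofHom
    { toFun := fun f => M.map (Quiver.Hom.op (f : A.unop ⟶ c)) x
      map_zero' := by
        show M.map ((0 : A.unop ⟶ c).op) x = 0
        rw [op_zero, Functor.map_zero]
        rfl
      map_add' := by
        intro f g
        show M.map (((show A.unop ⟶ c from f) + (show A.unop ⟶ c from g) : A.unop ⟶ c).op) x = _
        rw [op_add, Functor.map_add]
        rfl }
  naturality := by
    intro A B g
    ext f
    show M.map ((g.unop ≫ (show A.unop ⟶ c from f)).op) x = M.map g (M.map (f : A.unop ⟶ c).op x)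
    rw [op_comp, Functor.map_comp]
    rfl


/-- The group `ℚ/ℤ` (lifted to universe `u`). -/
abbrev QmodZ : Type u := ULift.{u} (AddCircle (1 : ℚ))

def Dual (M : ModC C) : C ⥤ AddCommGrpCat.{u} where
  obj c := AddCommGrpCat.of (M.obj (op c) →+ QmodZ.{u})
  map {c c'} f := AddCommGrpCat.ofHom
      { toFun := fun φ => φ.comp (show (M.obj (op c') : Type u) →+ M.obj (op c) from AddCommGrpCat.Hom.hom <| M.map f.op)
        map_zero' := AddMonoidHom.zero_comp _
        map_add' := fun φ ψ => AddMonoidHom.add_comp _ _ _ }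
  map_id c := by
    refine AddCommGrpCat.ext (fun φ => ?_)
    show (φ : (M.obj (op c) : Type u) →+ QmodZ.{u}).comp
      (show (M.obj (op c) : Type u) →+ M.obj (op c) from AddCommGrpCat.Hom.hom <| M.map (𝟙 c).op) = φ
    have h : (show (M.obj (op c) : Type u) →+ M.obj (op c) from AddCommGrpCat.Hom.hom <| M.map (𝟙 c).op) =
        AddMonoidHom.id _ := by rw [op_id, M.map_id]; rfl
    rw [h, AddMonoidHom.comp_id]
  map_comp {c c' c''} f g := by
    refine AddCommGrpCat.ext (fun φ => ?_)
    show (φ : (M.obj (op c) : Type u) →+ QmodZ.{u}).comp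
        (show (M.obj (op c'') : Type u) →+ M.obj (op c) from AddCommGrpCat.Hom.hom <| M.map (f ≫ g).op) =
      ((φ : (M.obj (op c) : Type u) →+ QmodZ.{u}).comp
        (show (M.obj (op c') : Type u) →+ M.obj (op c) from AddCommGrpCat.Hom.hom <| M.map f.op)).comp
        (show (M.obj (op c'') : Type u) →+ M.obj (op c') from AddCommGrpCat.Hom.hom <| M.map g.op)
    have h : (show (M.obj (op c'') : Type u) →+ M.obj (op c) from AddCommGrpCat.Hom.hom <| M.map (f ≫ g).op) =
        ((show (M.obj (op c') : Type u) →+ M.obj (op c) from AddCommGrpCat.Hom.hom <| M.map f.op).comp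
         (show (M.obj (op c'') : Type u) →+ M.obj (op c') from AddCommGrpCat.Hom.hom <| M.map g.op)) := by
      rw [op_comp, M.map_comp]; rfl
    rw [h, AddMonoidHom.comp_assoc]

/-- The character duality `D : Mod(Cᵒᵖ) → Mod(C)`, where covariant functors `C ⥤ Ab`
play the role of modules over `Cᵒᵖ`. -/
def Dual' (N : C ⥤ AddCommGrpCat.{u}) : ModC C where
  obj A := AddCommGrpCat.of (N.obj A.unop →+ QmodZ.{u})
  map {A B} g := AddCommGrpCat.ofHom
      { toFun := fun φ => φ.comp (show (N.obj B.unop : Type u) →+ N.obj A.unop from AddCommGrpCat.Hom.hom <| N.map g.unop)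
        map_zero' := AddMonoidHom.zero_comp _
        map_add' := fun φ ψ => AddMonoidHom.add_comp _ _ _ }
  map_id A := by
    refine AddCommGrpCat.ext (fun φ => ?_)
    show (φ : (N.obj A.unop : Type u) →+ QmodZ.{u}).comp
      (show (N.obj A.unop : Type u) →+ N.obj A.unop from AddCommGrpCat.Hom.hom <| N.map (𝟙 A).unop) = φ
    have h : (show (N.obj A.unop : Type u) →+ N.obj A.unop from AddCommGrpCat.Hom.hom <| N.map (𝟙 A).unop) =
        AddMonoidHom.id _ := by rw [unop_id, N.map_id]; rfl
    rw [h, AddMonoidHom.comp_id]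
  map_comp {A B B'} f g := by
    refine AddCommGrpCat.ext (fun φ => ?_)
    show (φ : (N.obj A.unop : Type u) →+ QmodZ.{u}).comp
        (show (N.obj B'.unop : Type u) →+ N.obj A.unop from AddCommGrpCat.Hom.hom <| N.map (f ≫ g).unop) =
      ((φ : (N.obj A.unop : Type u) →+ QmodZ.{u}).comp
        (show (N.obj B.unop : Type u) →+ N.obj A.unop from AddCommGrpCat.Hom.hom <| N.map f.unop)).comp
        (show (N.obj B'.unop : Type u) →+ N.obj B.unop from AddCommGrpCat.Hom.hom <| N.map g.unop)
    have h : (show (N.obj B'.unop : Type u) →+ N.obj A.unop from AddCommGrpCat.Hom.hom <| N.map (f ≫ g).unop) =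
        ((show (N.obj B.unop : Type u) →+ N.obj A.unop from AddCommGrpCat.Hom.hom <| N.map f.unop).comp
         (show (N.obj B'.unop : Type u) →+ N.obj B.unop from AddCommGrpCat.Hom.hom <| N.map g.unop)) := by
      rw [unop_comp, N.map_comp]; rfl
    rw [h, AddMonoidHom.comp_assoc]

/-- A submodule (subfunctor) of a `C`-module `N`. -/
structure Subfunctor (N : ModC C) where
  carrier : ∀ A : Cᵒᵖ, Set (N.obj A)
  zero_mem : ∀ A, (0 : N.obj A) ∈ carrier A
  add_mem : ∀ {A : Cᵒᵖ} {x y : N.obj A}, x ∈ carrier A → y ∈ carrier A → x + y ∈ carrier A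
  neg_mem : ∀ {A : Cᵒᵖ} {x : N.obj A}, x ∈ carrier A → -x ∈ carrier A
  map_mem : ∀ {A B : Cᵒᵖ} (f : A ⟶ B) {x : N.obj A}, x ∈ carrier A → N.map f x ∈ carrier B

/-- The ideal `(K(-):x)` of `C(-,c)`, for a submodule `K ⊆ N` and `x ∈ N(c)`. -/
def quotBySubIdeal {N : ModC C} [N.Additive] (K : Subfunctor N) {c : C}
    (x : N.obj (op c)) : RightIdeal c where
  carrier A := {f : A ⟶ c | N.map f.op x ∈ K.carrier (op A)}
  zero_mem A := by
    have : N.map ((0 : A ⟶ c).op) x = 0 := by rw [op_zero, Functor.map_zero]; rfl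
    simp only [Set.mem_setOf_eq, this]
    exact K.zero_mem _
  add_mem := fun {A f g} hf hg => by
    have : N.map ((f + g : A ⟶ c).op) x = N.map f.op x + N.map g.op x := by
      rw [op_add, Functor.map_add]; rfl
    simp only [Set.mem_setOf_eq, this]
    exact K.add_mem hf hg
  neg_mem := fun {A f} hf => by
    have : N.map ((-f : A ⟶ c).op) x = -(N.map f.op x) := by
      rw [op_neg, Functor.map_neg]; rfl
    simp only [Set.mem_setOf_eq, this]
    exact K.neg_mem hf
  comp_mem := fun {A B} g {f} hf => by
    have : N.map ((g ≫ f).op) x = N.map g.op (N.map f.op x) := by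
      rw [op_comp, N.map_comp]; rfl
    simp only [Set.mem_setOf_eq, this]
    exact K.map_mem g.op hf

/-- `π : N ⟶ P` realizes `P` as the quotient module `N/K`. -/
def IsQuotBySub {N : ModC C} (K : Subfunctor N) {P : ModC C} (π : N ⟶ P) : Prop :=
  Epi π ∧ ∀ (A : Cᵒᵖ) (y : N.obj A), π.app A y = 0 ↔ y ∈ K.carrier A

/-- `M` is (a copy of) the quotient `C(-,c)/I` of the representable functor by the ideal `I`. -/
def IsQuotByIdeal {c : C} (I : RightIdeal c) (M : ModC C) : Prop :=
  ∃ η : preadditiveYoneda.obj c ⟶ M, Epi η ∧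
    ∀ (A : C) (f : A ⟶ c), η.app (op A) f = 0 ↔ f ∈ I.carrier A

/-- A linear filter on the preadditive category `C`. -/
structure LinearFilter (C : Type u) [SmallCategory C] [Preadditive C] where
  F : ∀ c : C, Set (RightIdeal c)
  /-- (T1) upward closed -/
  upward : ∀ {c : C} {I J : RightIdeal c}, I ∈ F c →
    (∀ A : C, I.carrier A ⊆ J.carrier A) → J ∈ F c
  /-- (T2) closed under intersections -/
  inter : ∀ {c : C} {I J : RightIdeal c}, I ∈ F c → J ∈ F c → I.inf J ∈ F c
  /-- (T3) closed under quotient ideals -/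
  res_mem : ∀ {c B : C} {I : RightIdeal c}, I ∈ F c → ∀ h : B ⟶ c, I.res h ∈ F B

/-- A Gabriel filter on the preadditive category `C`. -/
structure GabrielFilter (C : Type u) [SmallCategory C] [Preadditive C]
    extends LinearFilter C where
  /-- (T4) -/
  t4 : ∀ {c : C} (J I : RightIdeal c), J ∈ F c →
    (∀ (B : C) (h : B ⟶ c), h ∈ J.carrier B → I.res h ∈ F B) → I ∈ F c

/-- `M` belongs to the (pre)torsion class `T_F` attached to a family of ideals `F`:
every element of `M` has annihilator ideal in the filter. -/
def memTF (F : ∀ c : C, Set (RightIdeal c)) (M : ModC C) : Prop :=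
  ∀ (c : C) (x : M.obj (op c)), ∃ I ∈ F c,
    ∀ (A : C) (f : A ⟶ c), f ∈ I.carrier A ↔ M.map f.op x = 0

/-- The family of ideals `F_T` attached to a class `T` of `C`-modules:
those ideals `I ⊆ C(-,c)` with `C(-,c)/I ∈ T`. -/
def FT (T : Set (ModC C)) : ∀ c : C, Set (RightIdeal c) :=
  fun c => {I : RightIdeal c | ∃ M ∈ T, IsQuotByIdeal I M}

def ClosedUnderSub (T : Set (ModC C)) : Prop :=
  ∀ ⦃M N : ModC C⦄ (f : N ⟶ M), Mono f → M ∈ T → N ∈ T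

def ClosedUnderQuot (T : Set (ModC C)) : Prop :=
  ∀ ⦃M N : ModC C⦄ (f : M ⟶ N), Epi f → M ∈ T → N ∈ T

def ClosedUnderCoprod (T : Set (ModC C)) : Prop :=
  ∀ (ι : Type u) (g : ι → ModC C), (∀ i, g i ∈ T) → (∐ g) ∈ T

def ClosedUnderExt (T : Set (ModC C)) : Prop :=
  ∀ S : ShortComplex (ModC C), S.ShortExact → S.X₁ ∈ T → S.X₃ ∈ T → S.X₂ ∈ T

/-- A hereditary pretorsion class. -/
def IsHeredPretorsion (T : Set (ModC C)) : Prop :=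
  ClosedUnderSub T ∧ ClosedUnderQuot T ∧ ClosedUnderCoprod T

/-- A hereditary torsion class. -/
def IsHeredTorsion (T : Set (ModC C)) : Prop :=
  IsHeredPretorsion T ∧ ClosedUnderExt T

/-- A torsion theory `(T, F)` on `Mod(C)`. -/
def IsTorsionTheory (T F : Set (ModC C)) : Prop :=
  (∀ t ∈ T, ∀ f ∈ F, ∀ φ : t ⟶ f, φ = 0) ∧
  (∀ M : ModC C, (∀ f ∈ F, ∀ φ : M ⟶ f, φ = 0) → M ∈ T) ∧
  (∀ M : ModC C, (∀ t ∈ T, ∀ φ : t ⟶ M, φ = 0) → M ∈ F)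

/-- A two-sided ideal of `C`. -/
structure TwoIdeal (C : Type u) [SmallCategory C] [Preadditive C] where
  carrier : ∀ A B : C, Set (A ⟶ B)
  zero_mem : ∀ A B : C, (0 : A ⟶ B) ∈ carrier A B
  add_mem : ∀ {A B : C} {f g : A ⟶ B}, f ∈ carrier A B → g ∈ carrier A B → f + g ∈ carrier A B
  neg_mem : ∀ {A B : C} {f : A ⟶ B}, f ∈ carrier A B → -f ∈ carrier A B
  comp_left_mem : ∀ {A A' B : C} (g : A' ⟶ A) {f : A ⟶ B}, f ∈ carrier A B → g ≫ f ∈ carrier A' B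
  comp_right_mem : ∀ {A B B' : C} {f : A ⟶ B} (g : B ⟶ B'), f ∈ carrier A B → f ≫ g ∈ carrier A B'

/-- The right ideal `I(-,c)` of a two-sided ideal. -/
def TwoIdeal.toRight (I : TwoIdeal C) (c : C) : RightIdeal c where
  carrier A := I.carrier A c
  zero_mem A := I.zero_mem A c
  add_mem := fun {A f g} h h' => I.add_mem h h'
  neg_mem := fun {A f} h => I.neg_mem h
  comp_mem := fun {A B} g {f} h => I.comp_left_mem g h

/-- `IN = 0`: the two-sided ideal `I` annihilates the module `N`. -/
def IdealKills (I : TwoIdeal C) (N : ModC C) : Prop :=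
  ∀ (A c : C) (f : A ⟶ c), f ∈ I.carrier A c → ∀ x : N.obj (op c), N.map f.op x = 0

/-- `N` is subgenerated by `U`: `N` embeds into a quotient of a coproduct of copies of `U`. -/
def SubGenBy (U N : ModC C) : Prop :=
  ∃ (ι : Type u) (L : ModC C) (q : (∐ fun _ : ι => U) ⟶ L) (m : N ⟶ L), Epi q ∧ Mono m

/-!
For `J ∈ F_c`, write `π : C(-,c)/I ↠ C(-,c)/(I+J)`; its target is a quotient of `C(-,c)/J ∈ T`.
The kernel `(I+J)/I` of `π` is generated by the classes `[h]`, `h ∈ J(B)`, and `f ↦ [f ≫ h]`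
identifies `C(-,B)/(I(-):h)` with the submodule generated by `[h]`; so `ker π` is a quotient of
`∐ C(-,B)/(I(-):h) ∈ T`. Closure under extensions then gives `C(-,c)/I ∈ T`.
-/

namespace RightIdeal

variable {c : C}

def toAddSubgroup (I : RightIdeal c) (A : C) : AddSubgroup (A ⟶ c) where
  carrier := I.carrier A
  zero_mem' := I.zero_mem A
  add_mem' := I.add_mem
  neg_mem' := I.neg_mem

def quotient (I : RightIdeal c) : ModC C where
  obj A := AddCommGrpCat.of ((A.unop ⟶ c) ⧸ I.toAddSubgroup A.unop)
  map g := AddCommGrpCat.ofHom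
    (QuotientAddGroup.map _ _ (Preadditive.leftComp c g.unop) fun _ hf => I.comp_mem g.unop hf)
  map_id A := by
    refine AddCommGrpCat.ext fun x => QuotientAddGroup.induction_on x fun f => ?_
    exact congrArg QuotientAddGroup.mk (Category.id_comp f)
  map_comp g g' := by
    refine AddCommGrpCat.ext fun x => QuotientAddGroup.induction_on x fun f => ?_
    exact congrArg QuotientAddGroup.mk (Category.assoc g'.unop g.unop f)

def mkQ (I : RightIdeal c) : preadditiveYoneda.obj c ⟶ I.quotient where
  app A := AddCommGrpCat.ofHom (QuotientAddGroup.mk' (I.toAddSubgroup A.unop))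

lemma mkQ_app_eq_zero_iff (I : RightIdeal c) {A : C} (f : A ⟶ c) :
    I.mkQ.app (op A) f = 0 ↔ f ∈ I.carrier A :=
  QuotientAddGroup.eq_zero_iff f

instance (I : RightIdeal c) : Epi I.mkQ := by
  have : ∀ A, Epi (I.mkQ.app A) := fun A => (AddCommGrpCat.epi_iff_surjective _).2
    (QuotientAddGroup.mk'_surjective (I.toAddSubgroup A.unop))
  exact NatTrans.epi_of_epi_app _

lemma isQuotByIdeal_quotient (I : RightIdeal c) : IsQuotByIdeal I I.quotient :=
  ⟨I.mkQ, inferInstance, fun _ f => I.mkQ_app_eq_zero_iff f⟩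

def liftQ (I : RightIdeal c) {M : ModC C} (η : preadditiveYoneda.obj c ⟶ M)
    (hη : ∀ (A : C) (f : A ⟶ c), f ∈ I.carrier A → η.app (op A) f = 0) :
    I.quotient ⟶ M where
  app A := AddCommGrpCat.ofHom (QuotientAddGroup.lift _ (η.app A).hom fun f hf => hη A.unop f hf)
  naturality _ _ g := by
    refine AddCommGrpCat.ext fun x => QuotientAddGroup.induction_on x fun f => ?_
    exact ConcreteCategory.congr_hom (η.naturality g) f

lemma mkQ_liftQ (I : RightIdeal c) {M : ModC C} (η : preadditiveYoneda.obj c ⟶ M)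
    (hη : ∀ (A : C) (f : A ⟶ c), f ∈ I.carrier A → η.app (op A) f = 0) :
    I.mkQ ≫ I.liftQ η hη = η :=
  rfl

instance : LE (RightIdeal c) := ⟨fun I J => ∀ A, I.carrier A ⊆ J.carrier A⟩

def sup (I J : RightIdeal c) : RightIdeal c where
  carrier A := {f | ∃ i ∈ I.carrier A, ∃ j ∈ J.carrier A, f = i + j}
  zero_mem A := ⟨0, I.zero_mem A, 0, J.zero_mem A, (add_zero 0).symm⟩
  add_mem := by
    rintro A f g ⟨i, hi, j, hj, rfl⟩ ⟨i', hi', j', hj', rfl⟩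
    exact ⟨i + i', I.add_mem hi hi', j + j', J.add_mem hj hj', by abel⟩
  neg_mem := by
    rintro A f ⟨i, hi, j, hj, rfl⟩
    exact ⟨-i, I.neg_mem hi, -j, J.neg_mem hj, by abel⟩
  comp_mem := by
    rintro A B g f ⟨i, hi, j, hj, rfl⟩
    exact ⟨g ≫ i, I.comp_mem g hi, g ≫ j, J.comp_mem g hj, Preadditive.comp_add _ _ _ _ _ _⟩

lemma le_sup_left (I J : RightIdeal c) : I ≤ I.sup J :=
  fun A f hf => ⟨f, hf, 0, J.zero_mem A, (add_zero f).symm⟩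

lemma le_sup_right (I J : RightIdeal c) : J ≤ I.sup J :=
  fun A f hf => ⟨0, I.zero_mem A, f, hf, (zero_add f).symm⟩

def factorQ {I J : RightIdeal c} (hIJ : I ≤ J) : I.quotient ⟶ J.quotient :=
  I.liftQ J.mkQ fun A f hf => (J.mkQ_app_eq_zero_iff f).2 (hIJ A hf)

instance {I J : RightIdeal c} (hIJ : I ≤ J) : Epi (factorQ hIJ) :=
  epi_of_epi_fac (I.mkQ_liftQ J.mkQ _)

lemma quotient_mem_of_mem_FT {T : Set (ModC C)} (hsub : ClosedUnderSub T) {I : RightIdeal c}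
    (hI : I ∈ FT T c) : I.quotient ∈ T := by
  obtain ⟨M, hM, η, -, hker⟩ := hI
  have hη : ∀ (A : C) (f : A ⟶ c), f ∈ I.carrier A → η.app (op A) f = 0 :=
    fun A f => (hker A f).2
  refine hsub (I.liftQ η hη) ?_ hM
  have : ∀ A, Mono ((I.liftQ η hη).app A) := fun A => by
    refine (AddCommGrpCat.mono_iff_injective _).2 <| (injective_iff_map_eq_zero _).2 fun x => ?_
    exact QuotientAddGroup.induction_on x fun f hf =>
      (QuotientAddGroup.eq_zero_iff f).2 ((hker A.unop f).1 hf)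
  exact NatTrans.mono_of_mono_app _

end RightIdeal


namespace CategoryTheory.NatTrans

variable {D : Type*} [Category* D] {M N : D ⥤ AddCommGrpCat.{u}} (φ : M ⟶ N)

def pointwiseKernel : D ⥤ AddCommGrpCat.{u} where
  obj A := AddCommGrpCat.of (φ.app A).hom.ker
  map {A B} g := AddCommGrpCat.ofHom <| ((M.map g).hom.comp (φ.app A).hom.ker.subtype).codRestrict
    (φ.app B).hom.ker fun x => by
      change φ.app B (M.map g x.1) = 0
      rw [NatTrans.naturality_apply, x.2, map_zero]
  map_id A := by
    refine AddCommGrpCat.ext fun x => Subtype.ext ?_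
    exact ConcreteCategory.congr_hom (M.map_id A) x.1
  map_comp g g' := by
    refine AddCommGrpCat.ext fun x => Subtype.ext ?_
    exact ConcreteCategory.congr_hom (M.map_comp g g') x.1

def pointwiseKernelι : pointwiseKernel φ ⟶ M where
  app A := AddCommGrpCat.ofHom (φ.app A).hom.ker.subtype

def pointwiseKernelLift {X : D ⥤ AddCommGrpCat.{u}} (ψ : X ⟶ M) (hψ : ψ ≫ φ = 0) :
    X ⟶ pointwiseKernel φ where
  app A := AddCommGrpCat.ofHom <| (ψ.app A).hom.codRestrict _ fun x => by
    simpa using ConcreteCategory.congr_hom (NatTrans.congr_app hψ A) x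
  naturality _ _ g := by
    refine AddCommGrpCat.ext fun x => Subtype.ext ?_
    exact ConcreteCategory.congr_hom (ψ.naturality g) x

def pointwiseKernelShortComplex : ShortComplex (D ⥤ AddCommGrpCat.{u}) :=
  ShortComplex.mk (pointwiseKernelι φ) φ (by ext A x; exact x.2)

lemma pointwiseKernelShortComplex_shortExact [Epi φ] :
    (pointwiseKernelShortComplex φ).ShortExact := by
  have : ∀ A, Mono ((pointwiseKernelι φ).app A) := fun A =>
    (AddCommGrpCat.mono_iff_injective _).2 Subtype.val_injective
  have : Mono (pointwiseKernelShortComplex φ).f := NatTrans.mono_of_mono_app (pointwiseKernelι φ)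
  have : Epi (pointwiseKernelShortComplex φ).g := ‹Epi φ›
  refine ⟨ShortComplex.exact_of_f_is_kernel _ ?_⟩
  refine evaluationJointlyReflectsLimits _ fun A => ?_
  exact (isLimitMapConeForkEquiv' ((evaluation D AddCommGrpCat.{u}).obj A) _).symm
    (AddCommGrpCat.kernelIsLimit (φ.app A))

end CategoryTheory.NatTrans

namespace RightIdeal

variable {c : C} (I J : RightIdeal c)

def resToQuotient {B : C} (h : B ⟶ c) : (I.res h).quotient ⟶ I.quotient :=
  (I.res h).liftQ (preadditiveYoneda.map h ≫ I.mkQ) fun _ _ hf => (I.mkQ_app_eq_zero_iff _).2 hf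

lemma resToQuotient_comp_factorQ {B : C} {h : B ⟶ c} (hh : h ∈ J.carrier B) :
    I.resToQuotient h ≫ factorQ (I.le_sup_left J) = 0 := by
  ext A x
  refine QuotientAddGroup.induction_on x fun f => ?_
  exact ((I.sup J).mkQ_app_eq_zero_iff _).2 (I.le_sup_right J _ (J.comp_mem f hh))

abbrev Elements := (B : C) × {h : B ⟶ c // h ∈ J.carrier B}

noncomputable def sigmaResToKernel :
    (∐ fun i : J.Elements => (I.res i.2.1).quotient) ⟶
      NatTrans.pointwiseKernel (factorQ (I.le_sup_left J)) :=
  Sigma.desc fun i => NatTrans.pointwiseKernelLift _ (I.resToQuotient i.2.1)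
    (I.resToQuotient_comp_factorQ J i.2.2)

lemma ι_sigmaResToKernel (i : J.Elements) :
    Sigma.ι (fun i : J.Elements => (I.res i.2.1).quotient) i ≫ I.sigmaResToKernel J =
      NatTrans.pointwiseKernelLift _ (I.resToQuotient i.2.1)
        (I.resToQuotient_comp_factorQ J i.2.2) :=
  Sigma.ι_desc _ _

instance : Epi (I.sigmaResToKernel J) := by
  have : ∀ A, Epi ((I.sigmaResToKernel J).app A) := fun A => by
    rw [AddCommGrpCat.epi_iff_surjective]
    rintro ⟨y, hy⟩
    obtain ⟨w, rfl⟩ := QuotientAddGroup.mk'_surjective (I.toAddSubgroup A.unop) y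
    obtain ⟨i, hi, j, hj, rfl⟩ := ((I.sup J).mkQ_app_eq_zero_iff w).1 hy
    -- `[i + j] = [j]` is the image of the class of the identity in `C(-,A)/(I(-):j)`.
    refine ⟨(Sigma.ι (fun i : J.Elements => (I.res i.2.1).quotient) ⟨A.unop, j, hj⟩).app A
      (QuotientAddGroup.mk (𝟙 A.unop)), ?_⟩
    refine (ConcreteCategory.congr_hom
      (NatTrans.congr_app (I.ι_sigmaResToKernel J ⟨A.unop, j, hj⟩) A) _).trans (Subtype.ext ?_)
    refine (QuotientAddGroup.eq_iff_sub_mem).2 ?_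
    change 𝟙 A.unop ≫ j - (i + j) ∈ I.carrier A.unop
    simpa using I.neg_mem hi
  exact NatTrans.epi_of_epi_app _

end RightIdeal

/-- the filter of a hereditary torsion class satisfies axiom (T4). -/
theorem statement10 (T : Set (ModC C)) (hT : IsHeredTorsion T) (c : C)
    (J I : RightIdeal c) (hJ : J ∈ FT T c)
    (h : ∀ (B : C) (h : B ⟶ c), h ∈ J.carrier B → I.res h ∈ FT T B) :
    I ∈ FT T c := by
  obtain ⟨⟨hsub, hquot, hcoprod⟩, hext⟩ := hT
  have hsup : (I.sup J).quotient ∈ T :=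
    hquot (RightIdeal.factorQ (I.le_sup_right J)) inferInstance
      (RightIdeal.quotient_mem_of_mem_FT hsub hJ)
  have hker : NatTrans.pointwiseKernel (RightIdeal.factorQ (I.le_sup_left J)) ∈ T :=
    hquot (I.sigmaResToKernel J) inferInstance <| hcoprod _ _ fun i =>
      RightIdeal.quotient_mem_of_mem_FT hsub (h i.1 i.2.1 i.2.2)
  have hI : I.quotient ∈ T := hext _ (NatTrans.pointwiseKernelShortComplex_shortExact
    (RightIdeal.factorQ (I.le_sup_left J))) hker hsup
  exact ⟨I.quotient, hI, I.isQuotByIdeal_quotient⟩
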